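/- arXiv:1912.04854 — 2 statements merged into one kernel-verified Lean document; each statement's English description precedes it below -/
import Mathlib

section
/- For any two vertices i, j in a finite set Λ, the square (u_i·u_j + 1)² = 0 in the Grassmann algebra, where u_i·u_j = -ξ_iη_j - ξ_jη_i - z_iz_j with z_i = 1 - ξ_iη_i. -/
open ExteriorAlgebra

noncomputable section

/-- Coordinate module carrying the `2n` Grassmann generators. -/
abbrev GrM (n : ℕ) : Type := (Fin n × Bool) → ℝ

/-- The real Grassmann algebra with generators `(ξ i, η i)`. -/
abbrev Gr (n : ℕ) : Type := ExteriorAlgebra ℝ (GrM n)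

/-- Generator `ξ i`. -/
def gξ {n : ℕ} (i : Fin n) : Gr n := ι ℝ (Pi.single (i, false) (1 : ℝ))

/-- Generator `η i`. -/
def gη {n : ℕ} (i : Fin n) : Gr n := ι ℝ (Pi.single (i, true) (1 : ℝ))

/-- `z i = 1 - ξ i * η i`. -/
def gz {n : ℕ} (i : Fin n) : Gr n := 1 - gξ i * gη i

/-- `u i · u j = -ξ i η j - ξ j η i - z i z j`. -/
def udot {n : ℕ} (i j : Fin n) : Gr n := -(gξ i * gη j) - gξ j * gη i - gz i * gz j

/-- Grassmann (left) derivative `∂_{ξ i}`, i.e. left contraction. -/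
def dξ {n : ℕ} (i : Fin n) : Module.End ℝ (Gr n) :=
  CliffordAlgebra.contractLeft (Q := (0 : QuadraticForm ℝ (GrM n))) (LinearMap.proj (i, false))

/-- Grassmann (left) derivative `∂_{η i}`. -/
def dη {n : ℕ} (i : Fin n) : Module.End ℝ (Gr n) :=
  CliffordAlgebra.contractLeft (Q := (0 : QuadraticForm ℝ (GrM n))) (LinearMap.proj (i, true))

/-- The pair `∂_{η i} ∂_{ξ i}`. -/
def pairD {n : ℕ} (i : Fin n) : Module.End ℝ (Gr n) := dη i * dξ i

/-- `∏ i, ∂_{η i} ∂_{ξ i}`. -/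
def fullD {n : ℕ} : Module.End ℝ (Gr n) := (List.ofFn (fun i : Fin n => pairD i)).prod

/-- Plain Berezin integral: apply all derivatives, take the scalar (degree-0) part. -/
def bint {n : ℕ} (G : Gr n) : ℝ := algebraMapInv (fullD G)

/-- Hyperbolic fermionic integral `[G]_0 = ∏ᵢ ∂_{ηᵢ}∂_{ξᵢ} ((∏ᵢ (1+ξᵢηᵢ)) G)`,
using `1/zᵢ = 1 + ξᵢηᵢ`. -/
def sint {n : ℕ} (G : Gr n) : ℝ :=
  bint ((List.ofFn (fun i : Fin n => (1 : Gr n) + gξ i * gη i)).prod * G)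

/-- Exponential of a Grassmann element by its terminating power series:
for elements with vanishing degree-0 part, `x ^ (2n+1) = 0`, so the series below is exact. -/
def expG {n : ℕ} (x : Gr n) : Gr n :=
  ∑ k ∈ Finset.range (2 * n + 1), (k.factorial : ℝ)⁻¹ • x ^ k

/-! `uᵢ·uⱼ + 1 = (ξᵢ - ξⱼ)(ηᵢ - ηⱼ) zⱼ`. The bivector `(ξᵢ - ξⱼ)(ηᵢ - ηⱼ)` squares to zero, and,
being even, it commutes with `zⱼ`, so the square of the product vanishes. -/

namespace ExteriorAlgebra

variable {R M : Type*} [CommRing R] [AddCommGroup M] [Module R M]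

theorem ι_mul_ι_swap (x y : M) : ι R x * ι R y = -(ι R y * ι R x) :=
  eq_neg_of_add_eq_zero_left (ι_add_mul_swap x y)

theorem ι_mul_ι_mul_ι_self (x y : M) : ι R x * ι R y * ι R x = 0 := by
  rw [ι_mul_ι_swap x y, neg_mul, mul_assoc, ι_sq_zero, mul_zero, neg_zero]

theorem mul_ι_mul_ι_mul_ι_self (w : ExteriorAlgebra R M) (x y : M) :
    w * ι R x * ι R y * ι R x = 0 := by
  rw [mul_assoc, mul_assoc, ← mul_assoc (ι R x), ι_mul_ι_mul_ι_self, mul_zero]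

theorem ι_mul_ι_sq (x y : M) : (ι R x * ι R y) ^ 2 = 0 := by
  rw [sq, ← mul_assoc, ι_mul_ι_mul_ι_self, zero_mul]

theorem ι_mul_ι_mul_ι_comm (x y z : M) : ι R x * (ι R y * ι R z) = ι R y * ι R z * ι R x := by
  rw [← mul_assoc, ι_mul_ι_swap x y, neg_mul, mul_assoc, ι_mul_ι_swap x z, mul_neg, neg_neg,
    mul_assoc]

theorem commute_ι_mul_ι (a b c d : M) : Commute (ι R a * ι R b) (ι R c * ι R d) := by
  rw [Commute, SemiconjBy, mul_assoc, ι_mul_ι_mul_ι_comm, ← mul_assoc, ι_mul_ι_mul_ι_comm,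
    mul_assoc]

/-- Multiplying by `1 - ι c * ι d` kills every monomial that repeats `c` or `d`. -/
theorem ι_sub_mul_ι_sub_mul_one_sub (a b c d : M) :
    (ι R a - ι R c) * (ι R b - ι R d) * (1 - ι R c * ι R d) =
      -(ι R a * ι R d) - ι R c * ι R b - (1 - ι R a * ι R b) * (1 - ι R c * ι R d) + 1 := by
  simp only [sub_mul, mul_sub, mul_one, one_mul, ← mul_assoc, ι_mul_ι_mul_ι_self,
    mul_ι_mul_ι_mul_ι_self, sub_zero]
  noncomm_ring

end ExteriorAlgebra

/-- For any two vertices `i, j`, `(uᵢ·uⱼ + 1)² = 0` in the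
Grassmann algebra, where `uᵢ·uⱼ = -ξᵢηⱼ - ξⱼηᵢ - zᵢzⱼ` and `zᵢ = 1 - ξᵢηᵢ`. -/
theorem udot_add_one_sq_eq_zero (n : ℕ) (i j : Fin n) :
    (udot i j + 1) ^ 2 = 0 := by
  have hfactor : udot i j + 1 = (gξ i - gξ j) * (gη i - gη j) * gz j :=
    (ι_sub_mul_ι_sub_mul_one_sub _ _ _ _).symm
  have hcomm : Commute ((gξ i - gξ j) * (gη i - gη j)) (gz j) := by
    simp only [gξ, gη, gz, ← map_sub]
    exact (Commute.one_right _).sub_right (commute_ι_mul_ι _ _ _ _)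
  rw [hfactor, hcomm.mul_pow, gξ, gξ, gη, gη, ← map_sub, ← map_sub, ι_mul_ι_sq, zero_mul]
end
end

section
/- Expansion identity: for symmetric weights β_{ij} on a finite vertex set, exp(½(u,Δ_β u)) = Σ_{F forest} ∏_{ij∈F} β_{ij}(u_i·u_j + 1) in the Grassmann algebra, where the sum over all edge subsets reduces to forests because products over sets containing cycles vanish. -/
open ExteriorAlgebra

noncomputable section

open scoped Classical

/-- `F` is a forest: edges are recorded as ordered pairs with `p.1 < p.2` and the
induced simple graph is acyclic. -/
def ForestRep {n : ℕ} (F : Finset (Fin n × Fin n)) : Prop :=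
  (∀ p ∈ F, p.1 < p.2) ∧ (SimpleGraph.fromRel (fun i j => (i, j) ∈ F)).IsAcyclic

/-- Weight `∏_{ij ∈ F} β i j` of a forest. -/
def fwt {n : ℕ} (β : Fin n → Fin n → ℝ) (F : Finset (Fin n × Fin n)) : ℝ :=
  ∏ p ∈ F, β p.1 p.2

/-- `∏_{T tree of F} (1 + ∑_{i ∈ T} g i)`, product over connected components. -/
noncomputable def treeFactor {n : ℕ} (F : Finset (Fin n × Fin n)) (g : Fin n → ℝ) : ℝ :=
  ∏ c ∈ Finset.univ.image (SimpleGraph.fromRel (fun i j => (i, j) ∈ F)).connectedComponentMk,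
    (1 + ∑ i ∈ Finset.univ.filter
        (fun i => (SimpleGraph.fromRel (fun i j => (i, j) ∈ F)).connectedComponentMk i = c), g i)

/-!
Each edge weight factors as `uᵢ·uⱼ + 1 = (ξᵢ - ξⱼ)(ηᵢ - ηⱼ) zⱼ`, a product of even elements.
So the weights are central and square to zero, and in the commutative center of the Grassmann
algebra `exp (∑ₑ wₑ) = ∏ₑ (1 + wₑ) = ∑_F ∏_{e ∈ F} wₑ`.

A product `∏_{e ∈ F} (ξ_{e₁} - ξ_{e₂})(η_{e₁} - η_{e₂})` vanishes as soon as the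
vectors `ξ_{e₁} - ξ_{e₂}` are linearly dependent: expanding one of them in terms of the
others, every term contains some vector twice. A cycle in `F` gives such a dependence (an
edge on a cycle is not a bridge, and `ξ_a - ξ_b` telescopes along a path from `a` to `b`
avoiding it), and so does any family of more than `2n` edges; the latter makes the sum of the
weights nilpotent of order `2n + 1`, so the truncated series `expG` is the exponential.
-/

namespace ExteriorAlgebra

variable {R M : Type*} [CommRing R] [AddCommGroup M] [Module R M]

theorem ι_mul_eq_involute_mul (v : M) (x : ExteriorAlgebra R M) :
    ι R v * x = CliffordAlgebra.involute x * ι R v := by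
  induction x using ExteriorAlgebra.induction with
  | algebraMap r => rw [AlgHom.commutes, Algebra.commutes]
  | ι m => rw [CliffordAlgebra.involute_ι, neg_mul, eq_neg_iff_add_eq_zero, ι_add_mul_swap]
  | mul a b ha hb => rw [← mul_assoc, ha, mul_assoc, hb, ← mul_assoc, ← map_mul]
  | add a b ha hb => rw [mul_add, ha, hb, map_add, add_mul]

theorem ι_mul_mul_ι (v : M) (x : ExteriorAlgebra R M) : ι R v * x * ι R v = 0 := by
  rw [ι_mul_eq_involute_mul, mul_assoc, ι_sq_zero, mul_zero]

theorem ι_mul_ι_mem_center (v w : M) :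
    ι R v * ι R w ∈ Subalgebra.center R (ExteriorAlgebra R M) :=
  Subalgebra.mem_center_iff.mpr fun x => calc
    x * (ι R v * ι R w)
        = CliffordAlgebra.involute (CliffordAlgebra.involute x) * ι R v * ι R w := by
      rw [CliffordAlgebra.involute_involute, mul_assoc]
    _ = ι R v * ι R w * x := by
      rw [← ι_mul_eq_involute_mul, mul_assoc, ← ι_mul_eq_involute_mul, mul_assoc]

variable (R) in
def ιPair (v w : M) :
    Subalgebra.center R (ExteriorAlgebra R M) :=
  ⟨ι R v * ι R w, ι_mul_ι_mem_center v w⟩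

@[simp]
theorem coe_ιPair (v w : M) : (ιPair R v w : ExteriorAlgebra R M) = ι R v * ι R w := rfl

theorem ιPair_zero_left (w : M) : ιPair R 0 w = 0 :=
  Subtype.ext <| by simp

theorem ιPair_add_left (u v w : M) : ιPair R (u + v) w = ιPair R u w + ιPair R v w :=
  Subtype.ext <| by simp [add_mul]

theorem ιPair_smul_left (r : R) (v w : M) : ιPair R (r • v) w = r • ιPair R v w :=
  Subtype.ext <| by simp

theorem ιPair_mul_ιPair_self_left (v w w' : M) : ιPair R v w * ιPair R v w' = 0 :=
  Subtype.ext <| by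
    rw [Subalgebra.coe_mul, coe_ιPair, coe_ιPair, ← mul_assoc, ι_mul_mul_ι, zero_mul,
      ZeroMemClass.coe_zero]

theorem prod_ιPair_eq_zero_of_not_linearIndepOn {K ι : Type*} [Field K] [Module K M]
    {s : Finset ι} {v w : ι → M} (h : ¬LinearIndepOn K v (s : Set ι)) :
    ∏ i ∈ s, ιPair K (v i) (w i) = 0 := by
  obtain ⟨e, he, hspan⟩ : ∃ e ∈ s, v e ∈ Submodule.span K (v '' (↑s \ {e})) := by
    simpa [linearIndepOn_iff_notMem_span] using h
  rw [← Finset.mul_prod_erase s _ he]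
  generalize v e = u at hspan ⊢
  induction hspan using Submodule.span_induction with
  | mem u hu =>
    obtain ⟨i, ⟨hi, hie⟩, rfl⟩ := hu
    rw [← Finset.mul_prod_erase _ _ (Finset.mem_erase.mpr ⟨hie, hi⟩), ← mul_assoc,
      ιPair_mul_ιPair_self_left, zero_mul]
  | zero => rw [ιPair_zero_left, zero_mul]
  | add a b _ _ ha hb => rw [ιPair_add_left, add_mul, ha, hb, add_zero]
  | smul r a _ ha => rw [ιPair_smul_left, smul_mul_assoc, ha, smul_zero]

end ExteriorAlgebra

theorem IsNilpotent.exp_sum_eq_prod_one_add {A ι : Type*} [CommRing A] [Module ℚ A]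
    (s : Finset ι) (f : ι → A) (hf : ∀ i ∈ s, f i ^ 2 = 0) :
    IsNilpotent.exp (∑ i ∈ s, f i) = ∏ i ∈ s, (1 + f i) := by
  classical
  induction s using Finset.induction_on with
  | empty => simp [IsNilpotent.exp_zero]
  | insert a s ha ih =>
    have hs : ∀ i ∈ s, f i ^ 2 = 0 := fun i hi => hf i (Finset.mem_insert_of_mem hi)
    have hfa := hf a (Finset.mem_insert_self a s)
    rw [Finset.sum_insert ha, Finset.prod_insert ha,
      IsNilpotent.exp_add_of_commute (Commute.all _ _) ⟨2, hfa⟩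
        (isNilpotent_sum fun i hi => ⟨2, hs i hi⟩), ih hs, IsNilpotent.exp_eq_sum hfa]
    simp [Finset.sum_range_succ]

theorem SimpleGraph.Reachable.sub_mem_span {V R M : Type*} [Ring R] [AddCommGroup M]
    [Module R M] {G : SimpleGraph V} (f : V → M) {u v : V} (h : G.Reachable u v) :
    f u - f v ∈ Submodule.span R {x | ∃ a b, G.Adj a b ∧ f a - f b = x} := by
  obtain ⟨w⟩ := h
  induction w with
  | nil => simp
  | cons hadj _ ih =>
    rw [← sub_add_sub_cancel]
    exact add_mem (Submodule.subset_span ⟨_, _, hadj, rfl⟩) ih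

theorem SimpleGraph.not_linearIndepOn_sub_of_not_isAcyclic {V K M : Type*} [Field K]
    [AddCommGroup M] [Module K M] {F : Set (V × V)} (f : V → M)
    (h : ¬(SimpleGraph.fromRel fun a b => (a, b) ∈ F).IsAcyclic) :
    ¬LinearIndepOn K (fun p => f p.1 - f p.2) F := by
  set G := SimpleGraph.fromRel fun a b => (a, b) ∈ F
  have hspan : ∀ p : V × V, (G.deleteEdges {s(p.1, p.2)}).Reachable p.1 p.2 →
      f p.1 - f p.2 ∈ Submodule.span K ((fun p => f p.1 - f p.2) '' (F \ {p})) := by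
    intro p hreach
    refine Submodule.span_le.mpr ?_ (hreach.sub_mem_span f)
    rintro _ ⟨a, b, hab, rfl⟩
    rw [SimpleGraph.deleteEdges_adj, SimpleGraph.fromRel_adj] at hab
    obtain ⟨⟨-, hab | hba⟩, hne⟩ := hab
    · exact Submodule.subset_span ⟨(a, b), ⟨hab, by rintro rfl; exact hne rfl⟩, rfl⟩
    · rw [← neg_sub]
      exact neg_mem (Submodule.subset_span ⟨(b, a), ⟨hba, by
        rintro rfl; exact hne (Sym2.eq_swap)⟩, rfl⟩)
  rw [SimpleGraph.isAcyclic_iff_forall_isBridge] at h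
  push Not at h
  obtain ⟨e, he, hbridge⟩ := h
  induction e using Sym2.ind with | h u v => ?_
  rw [SimpleGraph.isBridge_iff, not_not] at hbridge
  rw [SimpleGraph.mem_edgeSet, SimpleGraph.fromRel_adj] at he
  rw [linearIndepOn_iff_notMem_span]
  intro hli
  rcases he.2 with huv | hvu
  · exact hli _ huv (hspan _ hbridge)
  · exact hli _ hvu (hspan _ (by rw [Sym2.eq_swap]; exact hbridge.symm))

abbrev GrCenter (n : ℕ) : Subalgebra ℝ (Gr n) := Subalgebra.center ℝ (Gr n)

def grVec {n : ℕ} (b : Bool) (i : Fin n) : GrM n := Pi.single (i, b) 1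

theorem udot_add_one {n : ℕ} (i j : Fin n) :
    udot i j + 1
      = ι ℝ (grVec false i - grVec false j) * ι ℝ (grVec true i - grVec true j) * gz j := by
  have hη : gη j * gξ j * gη j = 0 := ι_mul_mul_ι _ _
  have hξ : ∀ x, gξ j * x * gξ j = 0 := ι_mul_mul_ι _
  rw [map_sub, map_sub, udot, gz, gz, ← sub_eq_zero]
  change -(gξ i * gη j) - gξ j * gη i - (1 - gξ i * gη i) * (1 - gξ j * gη j) + 1
      - (gξ i - gξ j) * (gη i - gη j) * (1 - gξ j * gη j) = 0
  calc _ = -(gξ i * (gη j * gξ j * gη j)) - gξ j * gη i * gξ j * gη j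
        + gξ j * gη j * gξ j * gη j := by noncomm_ring
    _ = 0 := by rw [hη, hξ, hξ]; simp

theorem gz_mem_center {n : ℕ} (j : Fin n) : gz j ∈ GrCenter n :=
  sub_mem (Subalgebra.one_mem _) (ι_mul_ι_mem_center _ _)

def edgeWeight {n : ℕ} (β : Fin n → Fin n → ℝ) (p : Fin n × Fin n) : GrCenter n :=
  β p.1 p.2 • (ιPair ℝ (grVec false p.1 - grVec false p.2) (grVec true p.1 - grVec true p.2) *
    ⟨gz p.2, gz_mem_center p.2⟩)

theorem coe_edgeWeight {n : ℕ} (β : Fin n → Fin n → ℝ) (p : Fin n × Fin n) :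
    (edgeWeight β p : Gr n) = β p.1 p.2 • (udot p.1 p.2 + 1) := by
  rw [udot_add_one]; rfl

theorem edgeWeight_sq {n : ℕ} (β : Fin n → Fin n → ℝ) (p : Fin n × Fin n) :
    edgeWeight β p ^ 2 = 0 := by
  rw [edgeWeight, smul_pow, mul_pow, sq (ιPair ℝ _ _), ιPair_mul_ιPair_self_left, zero_mul,
    smul_zero]

theorem prod_edgeWeight_eq_zero_of_not_linearIndepOn {n : ℕ} {ι : Type*}
    (β : Fin n → Fin n → ℝ) {s : Finset ι} {g : ι → Fin n × Fin n}
    (h : ¬LinearIndepOn ℝ (fun i => grVec false (g i).1 - grVec false (g i).2) (s : Set ι)) :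
    ∏ i ∈ s, edgeWeight β (g i) = 0 := by
  simp only [edgeWeight, Finset.prod_smul, Finset.prod_mul_distrib,
    prod_ιPair_eq_zero_of_not_linearIndepOn h, zero_mul, smul_zero]

theorem sum_edgeWeight_pow_eq_zero {n : ℕ} (β : Fin n → Fin n → ℝ)
    (s : Finset (Fin n × Fin n)) :
    (∑ p ∈ s, edgeWeight β p) ^ (2 * n + 1) = 0 := by
  rw [Finset.sum_pow']
  refine Finset.sum_eq_zero fun g _ => prod_edgeWeight_eq_zero_of_not_linearIndepOn β ?_
  intro hli
  rw [Finset.coe_univ, linearIndepOn_univ_iff] at hli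
  have := hli.fintype_card_le_finrank
  simp only [Fintype.card_fin, Module.finrank_fintype_fun_eq_card, Fintype.card_prod,
    Fintype.card_bool] at this
  omega

theorem expG_coe_eq_exp {n : ℕ} {x : GrCenter n} (h : x ^ (2 * n + 1) = 0) :
    expG (x : Gr n) = (IsNilpotent.exp x : GrCenter n) := by
  rw [IsNilpotent.exp_eq_sum h, expG]
  push_cast
  refine Finset.sum_congr rfl fun k _ => ?_
  rw [← Rat.cast_smul_eq_qsmul ℝ]
  push_cast
  rfl

theorem coe_prod_edgeWeight {n : ℕ} (β : Fin n → Fin n → ℝ) (F : Finset (Fin n × Fin n)) :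
    ((∏ p ∈ F, edgeWeight β p : GrCenter n) : Gr n)
      = (F.toList.map fun p => β p.1 p.2 • (udot p.1 p.2 + 1)).prod := by
  rw [← Finset.prod_map_toList]
  push_cast [List.map_map, Function.comp_def, coe_edgeWeight]
  rfl

theorem exp_laplacian_eq_forest_expansion_general (n : ℕ)
    (β : Fin n → Fin n → ℝ) :
    expG (∑ p ∈ Finset.univ.filter (fun p : Fin n × Fin n => p.1 < p.2),
        β p.1 p.2 • (udot p.1 p.2 + 1))
    = ∑ F : Finset (Fin n × Fin n),
        if ForestRep F
          then (F.toList.map (fun p => β p.1 p.2 • (udot p.1 p.2 + 1))).prod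
          else 0 := by
  set P := Finset.univ.filter (fun p : Fin n × Fin n => p.1 < p.2)
  have hforests : Finset.univ.filter ForestRep ⊆ P.powerset := fun F hF =>
    Finset.mem_powerset.mpr fun p hp =>
      Finset.mem_filter.mpr ⟨Finset.mem_univ p, (Finset.mem_filter.mp hF).2.1 p hp⟩
  have hcycles : ∀ F ∈ P.powerset, F ∉ Finset.univ.filter ForestRep →
      ∏ p ∈ F, edgeWeight β p = 0 := by
    intro F hF hnF
    have hlt : ∀ p ∈ F, p.1 < p.2 := fun p hp =>
      (Finset.mem_filter.mp (Finset.mem_powerset.mp hF hp)).2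
    exact prod_edgeWeight_eq_zero_of_not_linearIndepOn (g := id) β
      (SimpleGraph.not_linearIndepOn_sub_of_not_isAcyclic _ fun hac =>
        hnF (Finset.mem_filter.mpr ⟨Finset.mem_univ F, hlt, hac⟩))
  calc expG (∑ p ∈ P, β p.1 p.2 • (udot p.1 p.2 + 1))
      = ((IsNilpotent.exp (∑ p ∈ P, edgeWeight β p) : GrCenter n) : Gr n) := by
        rw [← expG_coe_eq_exp (sum_edgeWeight_pow_eq_zero β P)]
        push_cast [coe_edgeWeight]
        rfl
    _ = ((∑ F ∈ P.powerset, ∏ p ∈ F, edgeWeight β p : GrCenter n) : Gr n) :=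
        congrArg _ <| (IsNilpotent.exp_sum_eq_prod_one_add _ _ fun p _ => edgeWeight_sq β p).trans
          (Finset.prod_one_add _)
    _ = ((∑ F ∈ Finset.univ.filter ForestRep, ∏ p ∈ F, edgeWeight β p
          : GrCenter n) : Gr n) := by
        rw [Finset.sum_subset hforests hcycles]
    _ = _ := by
        rw [Finset.sum_filter]
        push_cast [apply_ite, coe_prod_edgeWeight]
        rfl

/-- Expansion identity: for symmetric weights `β`,
`exp(½(u, Δ_β u)) = ∑_{F forest} ∏_{ij∈F} βᵢⱼ (uᵢ·uⱼ + 1)`, where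
`½(u, Δ_β u) = ∑_{i<j} βᵢⱼ (uᵢ·uⱼ + 1)`; the sum over edge subsets reduces to
forests because products containing cycles vanish. -/
theorem exp_laplacian_eq_forest_expansion (n : ℕ)
    (β : Fin n → Fin n → ℝ) (hβ : ∀ i j, β i j = β j i) :
    expG (∑ p ∈ Finset.univ.filter (fun p : Fin n × Fin n => p.1 < p.2),
        β p.1 p.2 • (udot p.1 p.2 + 1))
    = ∑ F : Finset (Fin n × Fin n),
        if ForestRep F
          then (F.toList.map (fun p => β p.1 p.2 • (udot p.1 p.2 + 1))).prod
          else 0 :=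
  exp_laplacian_eq_forest_expansion_general n β
end
end
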